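/- The discrepancy function α ↦ ‖D w_α − f‖², where w_α = (D*D + αI)⁻¹ D* f, is monotonically nondecreasing in α > 0. -/
import Mathlib

open ContinuousLinearMap

local notation "⟪" x ", " y "⟫" => @inner ℂ _ _ x y

/-- `w` satisfying the normal equation minimizes the Tikhonov functional. -/
lemma tikhonov_min
    {H H₁ : Type*}
    [NormedAddCommGroup H] [InnerProductSpace ℂ H] [CompleteSpace H]
    [NormedAddCommGroup H₁] [InnerProductSpace ℂ H₁] [CompleteSpace H₁]
    (D : H →L[ℂ] H₁) (f : H₁) (c : ℝ) (hc : 0 ≤ c) (w v : H)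
    (hw : D.adjoint (D w) + (c : ℂ) • w = D.adjoint f) :
    ‖D w - f‖ ^ 2 + c * ‖w‖ ^ 2 ≤ ‖D v - f‖ ^ 2 + c * ‖v‖ ^ 2 := by
  set e := v - w with he
  have hzero : D.adjoint (D w) - D.adjoint f + (c : ℂ) • w = 0 := by
    rw [← hw]; abel
  have hsum : ⟪D w - f, D e⟫ + (c : ℂ) * ⟪w, e⟫ = 0 := by
    have h1 : ⟪D w - f, D e⟫ = ⟪D.adjoint (D w) - D.adjoint f, e⟫ := by
      rw [← adjoint_inner_left, map_sub]
    have h2 : (c : ℂ) * ⟪w, e⟫ = ⟪(c : ℂ) • w, e⟫ := by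
      rw [inner_smul_left]; simp
    rw [h1, h2, ← inner_add_left, hzero, inner_zero_left]
  have horth : Complex.re ⟪D w - f, D e⟫ + c * Complex.re ⟪w, e⟫ = 0 := by
    have := congrArg Complex.re hsum
    simpa using this
  have hv : D v - f = (D w - f) + D e := by rw [he, map_sub]; abel
  have hv2 : v = w + e := by rw [he]; abel
  have hn1 : ‖D v - f‖ ^ 2
      = ‖D w - f‖ ^ 2 + 2 * Complex.re ⟪D w - f, D e⟫ + ‖D e‖ ^ 2 := by
    rw [hv]; exact norm_add_sq (𝕜 := ℂ) _ _
  have hn2 : ‖v‖ ^ 2 = ‖w‖ ^ 2 + 2 * Complex.re ⟪w, e⟫ + ‖e‖ ^ 2 := by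
    rw [hv2]; exact norm_add_sq (𝕜 := ℂ) _ _
  nlinarith [sq_nonneg ‖D e‖, sq_nonneg ‖e‖, mul_nonneg hc (sq_nonneg ‖e‖)]

/-- The discrepancy `α ↦ ‖D w_α − f‖²`, where `w_α` is the Tikhonov regularized
solution (i.e. `(D*D + αI) w_α = D* f`, equivalently the unique minimizer of
`‖Dw − f‖² + α‖w‖²`), is monotonically nondecreasing in `α > 0`. -/
theorem tikhonov_discrepancy_monotone
    {H H₁ : Type*}
    [NormedAddCommGroup H] [InnerProductSpace ℂ H] [CompleteSpace H]
    [NormedAddCommGroup H₁] [InnerProductSpace ℂ H₁] [CompleteSpace H₁]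
    (D : H →L[ℂ] H₁) (f : H₁) (α β : ℝ) (hα : 0 < α) (hαβ : α ≤ β)
    (wα wβ : H)
    (hwα : D.adjoint (D wα) + (α : ℂ) • wα = D.adjoint f)
    (hwβ : D.adjoint (D wβ) + (β : ℂ) • wβ = D.adjoint f) :
    ‖D wα - f‖ ^ 2 ≤ ‖D wβ - f‖ ^ 2 := by
  rcases eq_or_lt_of_le hαβ with heq | hlt
  · -- α = β : the two solutions coincide
    subst heq
    have hdiff : D.adjoint (D (wα - wβ)) + (α : ℂ) • (wα - wβ) = 0 := by
      rw [map_sub, map_sub, smul_sub]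
      rw [show D.adjoint (D wα) - D.adjoint (D wβ) + ((α : ℂ) • wα - (α : ℂ) • wβ)
          = (D.adjoint (D wα) + (α : ℂ) • wα) - (D.adjoint (D wβ) + (α : ℂ) • wβ) by abel,
        hwα, hwβ, sub_self]
    set e := wα - wβ with he
    have hinner : ⟪D.adjoint (D e) + (α : ℂ) • e, e⟫ = 0 := by
      rw [hdiff, inner_zero_left]
    have hkey : ⟪D e, D e⟫ + (α : ℂ) * ⟪e, e⟫ = 0 := by
      have h := hinner
      rw [inner_add_left, inner_smul_left, adjoint_inner_left] at h
      simpa using h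
    have hre : ‖D e‖ ^ 2 + α * ‖e‖ ^ 2 = 0 := by
      have h3 := congrArg Complex.re hkey
      simpa [inner_self_eq_norm_sq_to_K, ← Complex.ofReal_pow] using h3
    have he0 : e = 0 := by
      have h1 : ‖e‖ ^ 2 = 0 := by nlinarith [sq_nonneg ‖D e‖, sq_nonneg ‖e‖]
      have : ‖e‖ = 0 := by nlinarith [norm_nonneg e]
      simpa using this
    have : wα = wβ := by rwa [sub_eq_zero] at he0
    rw [this]
  · have hβ : 0 ≤ β := le_of_lt (lt_of_lt_of_le hα hαβ)
    have h1 := tikhonov_min D f α hα.le wα wβ hwα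
    have h2 := tikhonov_min D f β hβ wβ wα hwβ
    nlinarith [h1, h2, sub_pos.mpr hlt]
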